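/- arXiv:1111.0788 — 5 statements merged into one kernel-verified Lean document; each statement's English description precedes it below -/
import Mathlib

section
/- For all real θ in [-π, π], θ² ≥ 5/2 - (8/3)cos θ + (1/6)cos 2θ. -/
/-!
Writing `f θ = θ² - (5/2 - (8/3) cos θ + (1/6) cos 2θ)`, one finds `f(0) = f'(0) = 0` and
`f''(θ) = 2 - (8/3) cos θ + (2/3) cos 2θ = (4/3)(1 - cos θ)² ≥ 0`. So `f` is convex with a critical
point at `0`, hence `f ≥ f(0) = 0` on all of `ℝ`.
-/

open Real Set

lemma ConvexOn.isMinOn_of_hasDerivAt_zero {S : Set ℝ} {f : ℝ → ℝ} {x : ℝ}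
    (hf : ConvexOn ℝ S f) (hx : x ∈ interior S) (hf' : HasDerivAt f 0 x) : IsMinOn f S x :=
  hf.isMinOn_of_rightDeriv_eq_zero hx <|
    hf'.hasDerivWithinAt.derivWithin (uniqueDiffWithinAt_Ioi x)

noncomputable def cosSeriesGap (θ : ℝ) : ℝ :=
  θ ^ 2 - (5 / 2 - (8 / 3) * cos θ + (1 / 6) * cos (2 * θ))

lemma hasDerivAt_cosSeriesGap (x : ℝ) :
    HasDerivAt cosSeriesGap (2 * x - (8 / 3) * sin x + (1 / 3) * sin (2 * x)) x :=
  ((hasDerivAt_pow 2 x).sub <| ((hasDerivAt_const x (5 / 2 : ℝ)).sub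
    ((hasDerivAt_cos x).const_mul (8 / 3))).add
    (((hasDerivAt_id x).const_mul 2).cos.const_mul (1 / 6))).congr_deriv <| by
      simp only [id]
      ring

lemma deriv_cosSeriesGap :
    deriv cosSeriesGap = fun x => 2 * x - (8 / 3) * sin x + (1 / 3) * sin (2 * x) :=
  funext fun x => (hasDerivAt_cosSeriesGap x).deriv

lemma hasDerivAt_deriv_cosSeriesGap (x : ℝ) :
    HasDerivAt (deriv cosSeriesGap) ((4 / 3) * (1 - cos x) ^ 2) x := by
  rw [deriv_cosSeriesGap]
  exact ((((hasDerivAt_id x).const_mul 2).sub ((hasDerivAt_sin x).const_mul (8 / 3))).add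
    (((hasDerivAt_id x).const_mul 2).sin.const_mul (1 / 3))).congr_deriv <| by
      simp only [id, cos_two_mul]
      ring

lemma convexOn_cosSeriesGap : ConvexOn ℝ univ cosSeriesGap :=
  convexOn_univ_of_deriv2_nonneg (fun x => (hasDerivAt_cosSeriesGap x).differentiableAt)
    (fun x => (hasDerivAt_deriv_cosSeriesGap x).differentiableAt)
    (fun x => by
      rw [Function.iterate_succ_apply, Function.iterate_one,
        (hasDerivAt_deriv_cosSeriesGap x).deriv]
      positivity)

lemma cosSeriesGap_nonneg (θ : ℝ) : 0 ≤ cosSeriesGap θ := by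
  have hmin : IsMinOn cosSeriesGap univ 0 :=
    convexOn_cosSeriesGap.isMinOn_of_hasDerivAt_zero (by simp)
      (by simpa using hasDerivAt_cosSeriesGap 0)
  have hzero : cosSeriesGap 0 = 0 := by norm_num [cosSeriesGap]
  simpa [hzero] using hmin (mem_univ θ)

theorem cos_series_lower_bound_general (θ : ℝ) :
    θ ^ 2 ≥ 5 / 2 - (8 / 3) * Real.cos θ + (1 / 6) * Real.cos (2 * θ) :=
  sub_nonneg.mp (cosSeriesGap_nonneg θ)

theorem cos_series_lower_bound (θ : ℝ) (hθ : θ ∈ Set.Icc (-π) π) :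
    θ ^ 2 ≥ 5 / 2 - (8 / 3) * Real.cos θ + (1 / 6) * Real.cos (2 * θ) :=
  cos_series_lower_bound_general θ
end

section
/- For a probability distribution p(n) on the nonnegative integers with mean μ = Σ n·p(n) finite, the Shannon entropy H = -Σ p(n) log p(n) satisfies H ≤ log(μ+1) + μ·log(1 + 1/μ) (with H ≤ 0 = log 1 when μ = 0). -/
open Real Filter Topology

/-!
Gibbs' inequality compares the entropy of `p` with its cross entropy against any positive
distribution `q`: `-∑ p log p ≤ -∑ p log q`. Against the geometric distribution
`q n = (1 - r) rⁿ` the cross entropy depends on `p` only through its mean `μ`, namely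
`-log (1 - r) - μ log r`; the choice `r = μ / (μ + 1)` gives the bound, and for `μ = 0`
one lets `r → 0`.
-/

theorem Real.negMulLog_le_sub_sub_mul_log {p q : ℝ} (hp : 0 ≤ p) (hq : 0 < q) :
    negMulLog p ≤ q - p - p * log q := by
  have hmul := negMulLog_mul q (p / q)
  rw [mul_div_cancel₀ _ hq.ne'] at hmul
  have hle := mul_le_mul_of_nonneg_left (negMulLog_le_one_sub_self (div_nonneg hp hq.le)) hq.le
  rw [hmul, negMulLog]
  field_simp at hle ⊢
  linarith

theorem tsum_negMulLog_le_tsum {ι : Type*} {p q : ι → ℝ} (hp : ∀ i, 0 ≤ p i)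
    (hp_le_one : ∀ i, p i ≤ 1) (hq : ∀ i, 0 < q i)
    (hsum : Summable fun i => q i - p i - p i * log (q i)) :
    ∑' i, negMulLog (p i) ≤ ∑' i, (q i - p i - p i * log (q i)) :=
  have hle i := negMulLog_le_sub_sub_mul_log (hp i) (hq i)
  (hsum.of_nonneg_of_le (fun i => negMulLog_nonneg (hp i) (hp_le_one i)) hle).tsum_le_tsum hle hsum

theorem tsum_negMulLog_le_of_geometric {p : ℕ → ℝ} (hp : ∀ n, 0 ≤ p n) (hp1 : ∑' n, p n = 1)
    (hmean : Summable fun n : ℕ => (n : ℝ) * p n) {r : ℝ} (hr0 : 0 < r) (hr1 : r < 1) :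
    ∑' n, negMulLog (p n) ≤ -log (1 - r) - (∑' n : ℕ, (n : ℝ) * p n) * log r := by
  have hsum : Summable p := by
    by_contra h
    exact zero_ne_one ((tsum_eq_zero_of_not_summable h).symm.trans hp1)
  have hp_le_one n : p n ≤ 1 := hp1 ▸ hsum.le_tsum n fun j _ => hp j
  set q : ℕ → ℝ := fun n => (1 - r) * r ^ n
  have hq_pos n : 0 < q n := mul_pos (by linarith) (pow_pos hr0 n)
  have hq_sum : HasSum q 1 := by
    have := (hasSum_geometric_of_lt_one hr0.le hr1).mul_left (1 - r)
    rwa [mul_inv_cancel₀ (sub_ne_zero.mpr hr1.ne')] at this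
  have hterm n : q n - p n - p n * log (q n) =
      q n - (1 + log (1 - r)) * p n - log r * ((n : ℝ) * p n) := by
    rw [log_mul (by linarith) (pow_pos hr0 n).ne', log_pow]
    ring
  have hcross := (hq_sum.sub (hsum.hasSum.mul_left (1 + log (1 - r)))).sub
    (hmean.hasSum.mul_left (log r))
  rw [← funext hterm, hp1] at hcross
  have hgibbs := tsum_negMulLog_le_tsum hp hp_le_one hq_pos hcross.summable
  rw [hcross.tsum_eq] at hgibbs
  linarith

theorem le_zero_of_forall_le_neg_log_one_sub {a : ℝ}
    (h : ∀ r : ℝ, 0 < r → r < 1 → a ≤ -log (1 - r)) : a ≤ 0 := by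
  have hcont : ContinuousAt (fun r : ℝ => -log (1 - r)) 0 :=
    ((continuousAt_const.sub continuousAt_id).log (by norm_num)).neg
  have hlim : Tendsto (fun r : ℝ => -log (1 - r)) (𝓝[>] 0) (𝓝 0) := by
    simpa using hcont.tendsto.mono_left nhdsWithin_le_nhds
  exact ge_of_tendsto hlim <| eventually_of_mem (Ioo_mem_nhdsGT one_pos) fun r hr => h r hr.1 hr.2

theorem entropy_le_geometric_general (p : ℕ → ℝ) (hp : ∀ n, 0 ≤ p n)
    (hp1 : ∑' n, p n = 1)
    (hmean : Summable (fun n : ℕ => (n : ℝ) * p n))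
    (μ H : ℝ) (hμ : μ = ∑' n : ℕ, (n : ℝ) * p n)
    (hH : H = -∑' n, p n * Real.log (p n)) :
    H ≤ Real.log (μ + 1) + μ * Real.log (1 + 1 / μ) := by
  have hH' : H = ∑' n, negMulLog (p n) := by
    rw [hH, ← tsum_neg]
    simp only [negMulLog_eq_neg]
  have hbound {r : ℝ} (hr0 : 0 < r) (hr1 : r < 1) : H ≤ -log (1 - r) - μ * log r :=
    hH' ▸ hμ ▸ tsum_negMulLog_le_of_geometric hp hp1 hmean hr0 hr1
  rcases (hμ ▸ tsum_nonneg fun n => mul_nonneg n.cast_nonneg (hp n) : 0 ≤ μ).eq_or_lt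
    with rfl | hμ0
  · simpa using le_zero_of_forall_le_neg_log_one_sub fun r hr0 hr1 => by
      simpa using hbound hr0 hr1
  · have h1 : 1 - μ / (μ + 1) = (μ + 1)⁻¹ := by field_simp; ring
    have h2 : μ / (μ + 1) = (1 + 1 / μ)⁻¹ := by field_simp
    have hμ1 : 0 < μ + 1 := by linarith
    have := hbound (div_pos hμ0 hμ1) ((div_lt_one hμ1).mpr (lt_add_one μ))
    rw [h1, h2, log_inv, log_inv] at this
    linarith

/-- The Shannon entropy (in nats) of a probability distribution on ℕ with finite
mean μ is at most that of the geometric (thermal) distribution with the same mean: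
H ≤ log(μ+1) + μ·log(1 + 1/μ).  (When μ = 0 the right-hand side is 0, by the
convention 1/0 = 0.) -/
theorem entropy_le_geometric (p : ℕ → ℝ) (hp : ∀ n, 0 ≤ p n)
    (hsum : Summable p) (hp1 : ∑' n, p n = 1)
    (hmean : Summable (fun n : ℕ => (n : ℝ) * p n))
    (hent : Summable (fun n => p n * Real.log (p n)))
    (μ H : ℝ) (hμ : μ = ∑' n : ℕ, (n : ℝ) * p n)
    (hH : H = -∑' n, p n * Real.log (p n)) :
    H ≤ Real.log (μ + 1) + μ * Real.log (1 + 1 / μ) :=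
  entropy_le_geometric_general p hp hp1 hmean μ H hμ hH
end

section
/- Suppose a probability density p on [-π, π] and a probability distribution q on ℕ satisfy the entropic uncertainty relation H(p) + H(q) ≥ log 2π, where q has finite mean ⟨N⟩ and p has second moment (δΦ̂)² = ∫ θ² p(θ) dθ. Then (δΦ̂)² > (2π/e) e^{-2H(q)}. -/
open Real MeasureTheory ProbabilityTheory
open scoped NNReal

/-!
Among densities with a given second moment `σ²`, the centred Gaussian of variance `σ²` has the
largest entropy `½ log (2π e σ²)`; this is Gibbs' inequality `∫ p log (g / p) ≤ ∫ g - ∫ p = 0`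
against the Gaussian `g`. A density supported in `[-π, π]` misses the positive Gaussian mass
outside that interval, so the inequality is strict. Combining `H(p) < ½ log (2π e σ²)` with
`H(p) + H(q) ≥ log 2π` and exponentiating gives the bound on `σ²`.
-/

theorem mul_log_sub_log_le_sub {a b : ℝ} (ha : 0 ≤ a) (hb : 0 < b) :
    a * (log b - log a) ≤ b - a := by
  rcases ha.eq_or_lt with rfl | ha
  · simpa using hb.le
  calc a * (log b - log a) = a * log (b / a) := by rw [log_div hb.ne' ha.ne']
    _ ≤ a * (b / a - 1) := by gcongr; exact log_le_sub_one_of_pos (div_pos hb ha)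
    _ = b - a := by field_simp

section Gibbs

variable {α : Type*} [MeasurableSpace α] {μ : Measure α} {p g : α → ℝ} {s : Set α}

theorem setIntegral_compl_pos_of_pos (hg : ∀ x, 0 < g x) (hgi : Integrable g μ)
    (hs : μ sᶜ ≠ 0) : 0 < ∫ x in sᶜ, g x ∂μ := by
  rw [setIntegral_pos_iff_support_of_nonneg_ae (ae_of_all _ fun x => (hg x).le) hgi.integrableOn,
    (Set.eq_univ_of_forall fun x => (hg x).ne' : Function.support g = Set.univ), Set.univ_inter]
  exact pos_iff_ne_zero.mpr hs

/-- Strict Gibbs inequality. -/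
theorem integral_mul_log_sub_integral_mul_log_lt (hs : MeasurableSet s) (hsc : μ sᶜ ≠ 0)
    (hp : ∀ x, 0 ≤ p x) (hps : ∀ x ∉ s, p x = 0) (hg : ∀ x, 0 < g x)
    (hpi : Integrable p μ) (hgi : Integrable g μ)
    (hplogg : Integrable (fun x => p x * log (g x)) μ)
    (hplogp : Integrable (fun x => p x * log (p x)) μ) :
    ∫ x, p x * log (g x) ∂μ - ∫ x, p x * log (p x) ∂μ < ∫ x, g x ∂μ - ∫ x, p x ∂μ := by
  have hgibbs : ∫ x in s, (p x * log (g x) - p x * log (p x)) ∂μ ≤ ∫ x in s, (g x - p x) ∂μ :=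
    setIntegral_mono (hplogg.sub hplogp).integrableOn (hgi.sub hpi).integrableOn
      fun x => (mul_sub (p x) _ _).symm.trans_le (mul_log_sub_log_le_sub (hp x) (hg x))
  have hsplit := integral_add_compl hs hgi
  have hcompl := setIntegral_compl_pos_of_pos hg hgi hsc
  rw [integral_sub hgi.integrableOn hpi.integrableOn,
    setIntegral_eq_integral_of_forall_compl_eq_zero hps,
    setIntegral_eq_integral_of_forall_compl_eq_zero fun x hx => by simp [hps x hx],
    integral_sub hplogg hplogp] at hgibbs
  linarith

end Gibbs

theorem integral_sq_mul_pos {p : ℝ → ℝ} (hp : ∀ x, 0 ≤ p x)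
    (hx2 : Integrable fun x => x ^ 2 * p x) (hp1 : ∫ x, p x ≠ 0) :
    0 < ∫ x, x ^ 2 * p x := by
  rw [integral_pos_iff_support_of_nonneg (fun x => mul_nonneg (sq_nonneg x) (hp x)) hx2]
  have hsupp : Function.support (fun x => x ^ 2 * p x) = Function.support p \ {0} := by
    ext x
    simp [and_comm]
  rw [hsupp, measure_sdiff_null (measure_singleton 0), pos_iff_ne_zero]
  intro hnull
  exact hp1 (integral_eq_zero_of_ae ((Measure.measure_support_eq_zero_iff volume).mp hnull))

theorem log_gaussianPDFReal {v : ℝ≥0} (hv : v ≠ 0) (m x : ℝ) :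
    log (gaussianPDFReal m v x) = -log (2 * π * v) / 2 - (x - m) ^ 2 / (2 * v) := by
  rw [gaussianPDFReal, log_mul (by positivity) (exp_pos _).ne', log_inv, log_exp,
    log_sqrt (by positivity)]
  ring

/-- Gaussian maximum-entropy bound, via the centred Gaussian of the same second moment. -/
theorem neg_integral_mul_log_lt_half_log_second_moment {p : ℝ → ℝ} {s : Set ℝ}
    (hs : MeasurableSet s) (hsc : volume sᶜ ≠ 0) (hp : ∀ x, 0 ≤ p x) (hps : ∀ x ∉ s, p x = 0)
    (hpi : Integrable p) (hp1 : ∫ x, p x = 1) (hx2 : Integrable fun x => x ^ 2 * p x)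
    (hplogp : Integrable fun x => p x * log (p x)) :
    -∫ x, p x * log (p x) < log (2 * π * exp 1 * ∫ x, x ^ 2 * p x) / 2 := by
  set σ2 := ∫ x, x ^ 2 * p x with hσ2_def
  have hσ2 : 0 < σ2 := integral_sq_mul_pos hp hx2 (by simp [hp1])
  set v := σ2.toNNReal
  have hv : v ≠ 0 := (toNNReal_pos.mpr hσ2).ne'
  have hvσ2 : (v : ℝ) = σ2 := coe_toNNReal _ hσ2.le
  have hplogg : (fun x => p x * log (gaussianPDFReal 0 v x)) =
      fun x => -log (2 * π * σ2) / 2 * p x - (2 * σ2)⁻¹ * (x ^ 2 * p x) := by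
    funext x
    rw [log_gaussianPDFReal hv, hvσ2]
    ring
  have hplogg_int : Integrable fun x => p x * log (gaussianPDFReal 0 v x) := by
    rw [hplogg]
    exact (hpi.const_mul _).sub (hx2.const_mul _)
  have hcross : ∫ x, p x * log (gaussianPDFReal 0 v x) = -log (2 * π * σ2) / 2 - 1 / 2 := by
    rw [hplogg, integral_sub (hpi.const_mul _) (hx2.const_mul _), integral_const_mul,
      integral_const_mul, hp1, ← hσ2_def]
    field_simp
  have hgibbs := integral_mul_log_sub_integral_mul_log_lt hs hsc hp hps
    (gaussianPDFReal_pos 0 v · hv) hpi (integrable_gaussianPDFReal 0 v) hplogg_int hplogp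
  rw [hcross, integral_gaussianPDFReal_eq_one 0 hv, hp1] at hgibbs
  rw [show 2 * π * exp 1 * σ2 = 2 * π * σ2 * exp 1 by ring, log_mul (by positivity) (by positivity),
    log_exp]
  linarith

theorem volume_compl_Icc_ne_zero (a b : ℝ) : volume (Set.Icc a b)ᶜ ≠ 0 := by
  have hIoi : Set.Ioi b ⊆ (Set.Icc a b)ᶜ := fun x hx => by simp [Set.mem_Ioi.mp hx]
  exact ne_bot_of_le_ne_bot (by simp) (measure_mono hIoi)

theorem second_moment_gt_of_entropic_uncertainty_general
    (p : ℝ → ℝ) (hpos : ∀ x, 0 ≤ p x)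
    (hsupp : ∀ x, x ∉ Set.Icc (-π) π → p x = 0)
    (hint : Integrable p) (hp1 : ∫ x, p x = 1)
    (hx2 : Integrable (fun x => x ^ 2 * p x))
    (hplogp : Integrable (fun x => p x * Real.log (p x)))
    (δΦ2 Hp Hq : ℝ)
    (hδ : δΦ2 = ∫ θ, θ ^ 2 * p θ)
    (hHp : Hp = -∫ θ, p θ * Real.log (p θ))
    (hEUR : Hp + Hq ≥ Real.log (2 * π)) :
    δΦ2 > (2 * π / Real.exp 1) * Real.exp (-2 * Hq) := by
  have hδpos : 0 < δΦ2 := hδ ▸ integral_sq_mul_pos hpos hx2 (by simp [hp1])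
  have hgauss : Hp < log (2 * π * exp 1 * δΦ2) / 2 := hδ ▸ hHp ▸
    neg_integral_mul_log_lt_half_log_second_moment measurableSet_Icc
      (volume_compl_Icc_ne_zero _ _) hpos hsupp hint hp1 hx2 hplogp
  rw [gt_iff_lt, ← log_lt_log_iff (by positivity) hδpos, log_mul (by positivity) (by positivity),
    log_div (by positivity) (by positivity), log_exp, log_exp]
  rw [log_mul (by positivity) hδpos.ne', log_mul (by positivity) (by positivity), log_exp] at hgauss
  linarith

/-- If a probability density p on [-π,π] (with second moment (δΦ̂)²) and a
probability distribution q on ℕ (with finite mean) satisfy the entropic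
uncertainty relation H(p) + H(q) ≥ log 2π, then (δΦ̂)² > (2π/e)·e^{-2H(q)}. -/
theorem second_moment_gt_of_entropic_uncertainty
    (p : ℝ → ℝ) (hmeas : Measurable p) (hpos : ∀ x, 0 ≤ p x)
    (hsupp : ∀ x, x ∉ Set.Icc (-π) π → p x = 0)
    (hint : Integrable p) (hp1 : ∫ x, p x = 1)
    (hx2 : Integrable (fun x => x ^ 2 * p x))
    (hplogp : Integrable (fun x => p x * Real.log (p x)))
    (q : ℕ → ℝ) (hq : ∀ n, 0 ≤ q n) (hqsum : Summable q) (hq1 : ∑' n, q n = 1)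
    (hqmean : Summable (fun n : ℕ => (n : ℝ) * q n))
    (hqent : Summable (fun n => q n * Real.log (q n)))
    (δΦ2 Hp Hq : ℝ)
    (hδ : δΦ2 = ∫ θ, θ ^ 2 * p θ)
    (hHp : Hp = -∫ θ, p θ * Real.log (p θ))
    (hHq : Hq = -∑' n, q n * Real.log (q n))
    (hEUR : Hp + Hq ≥ Real.log (2 * π)) :
    δΦ2 > (2 * π / Real.exp 1) * Real.exp (-2 * Hq) :=
  second_moment_gt_of_entropic_uncertainty_general p hpos hsupp hint hp1 hx2 hplogp δΦ2 Hp Hq hδ hHp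
    hEUR
end

section
/- Suppose a probability density p on [-π, π] and a distribution q on ℕ with mean ⟨N⟩ satisfy H(p) + H(q) ≥ log 2π. Then L := e^{H(p)} satisfies L ≥ 2π e^{-H(q)} > (2π/e)/(⟨N⟩+1). -/
/-!
Comparing `q` with the geometric distribution `r n = (1 - c) c ^ n` through Gibbs' inequality
gives `H(q) ≤ -log (1 - c) - ⟨N⟩ log c` for every `c ∈ (0, 1)`. The choice
`c = (⟨N⟩ + 1) / (⟨N⟩ + 2)` turns the right-hand side into `log M + M log (1 + 1/M)` with
`M = ⟨N⟩ + 1`, and `log (1 + 1/M) < 1/M` makes it strictly smaller than `log M + 1`.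
Both claimed inequalities then follow by exponentiating `H(p) ≥ log 2π - H(q)`
and `-H(q) > -log M - 1`.
-/

open Real MeasureTheory

lemma sub_add_mul_log_le_mul_log {x y : ℝ} (hx : 0 ≤ x) (hy : 0 < y) :
    x - y + x * log y ≤ x * log x := by
  rcases hx.eq_or_lt with rfl | hx
  · simpa using hy.le
  · have hlog : log y - log x ≤ y / x - 1 := by
      simpa [log_div hy.ne' hx.ne'] using log_le_sub_one_of_pos (div_pos hy hx)
    have := mul_le_mul_of_nonneg_left hlog hx.le
    rw [mul_sub, mul_sub, mul_div_cancel₀ y hx.ne', mul_one] at this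
    linarith

theorem tsum_mul_log_le_tsum_mul_log_self {ι : Type*} {q r : ι → ℝ}
    (hq : ∀ i, 0 ≤ q i) (hr : ∀ i, 0 < r i) (hq_sum : Summable q) (hr_sum : Summable r)
    (hrq : ∑' i, r i ≤ ∑' i, q i) (hqr_log : Summable fun i => q i * log (r i))
    (hq_log : Summable fun i => q i * log (q i)) :
    ∑' i, q i * log (r i) ≤ ∑' i, q i * log (q i) := by
  have hgibbs := ((hq_sum.sub hr_sum).add hqr_log).tsum_le_tsum
    (fun i => sub_add_mul_log_le_mul_log (hq i) (hr i)) hq_log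
  rw [(hq_sum.sub hr_sum).tsum_add hqr_log, hq_sum.tsum_sub hr_sum] at hgibbs
  linarith

section Geometric

variable {q : ℕ → ℝ} {c : ℝ}

lemma mul_log_geometric (hc0 : 0 < c) (hc1 : c < 1) (n : ℕ) :
    q n * log ((1 - c) * c ^ n) = log (1 - c) * q n + log c * ((n : ℝ) * q n) := by
  rw [log_mul (by linarith) (pow_ne_zero n hc0.ne'), log_pow]
  ring

theorem neg_tsum_mul_log_le_of_geometric (hq : ∀ n, 0 ≤ q n) (hq_sum : Summable q)
    (hq_one : ∑' n, q n = 1) (hq_mean : Summable fun n : ℕ => (n : ℝ) * q n)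
    (hq_log : Summable fun n => q n * log (q n)) (hc0 : 0 < c) (hc1 : c < 1) :
    -∑' n, q n * log (q n) ≤ -log (1 - c) - log c * ∑' n : ℕ, (n : ℝ) * q n := by
  have hcross_sum : Summable fun n => log (1 - c) * q n + log c * ((n : ℝ) * q n) :=
    (hq_sum.mul_left _).add (hq_mean.mul_left _)
  have hcross : ∑' n, q n * log ((1 - c) * c ^ n)
      = log (1 - c) + log c * ∑' n : ℕ, (n : ℝ) * q n := by
    simp_rw [mul_log_geometric hc0 hc1]
    rw [(hq_sum.mul_left _).tsum_add (hq_mean.mul_left _), tsum_mul_left, tsum_mul_left, hq_one,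
      mul_one]
  have hgeom_one : ∑' n : ℕ, (1 - c) * c ^ n = 1 := by
    rw [tsum_mul_left, tsum_geometric_of_lt_one hc0.le hc1, mul_inv_cancel₀ (by linarith)]
  have hgibbs := tsum_mul_log_le_tsum_mul_log_self hq
    (fun n => mul_pos (sub_pos.2 hc1) (pow_pos hc0 n)) hq_sum
    ((summable_geometric_of_lt_one hc0.le hc1).mul_left _) (by rw [hgeom_one, hq_one])
    (by simpa only [mul_log_geometric hc0 hc1] using hcross_sum) hq_log
  linarith

end Geometric

lemma log_add_one_add_mul_log_lt {M : ℝ} (hM : 0 < M) :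
    log (M + 1) + (M - 1) * log ((M + 1) / M) < log M + 1 := by
  have hlt : log ((M + 1) / M) < (M + 1) / M - 1 :=
    log_lt_sub_one_of_pos (by positivity) (by rw [Ne, div_eq_one_iff_eq hM.ne']; linarith)
  have hMt : M * log ((M + 1) / M) < 1 := by
    have := mul_lt_mul_of_pos_left hlt hM
    rwa [mul_sub, mul_div_cancel₀ _ hM.ne', mul_one, add_sub_cancel_left] at this
  rw [log_div (by linarith) hM.ne'] at hMt ⊢
  nlinarith

theorem neg_tsum_mul_log_lt_log_mean_add_one {q : ℕ → ℝ} (hq : ∀ n, 0 ≤ q n)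
    (hq_sum : Summable q) (hq_one : ∑' n, q n = 1)
    (hq_mean : Summable fun n : ℕ => (n : ℝ) * q n)
    (hq_log : Summable fun n => q n * log (q n)) :
    -∑' n, q n * log (q n) < log (∑' n : ℕ, (n : ℝ) * q n + 1) + 1 := by
  set N := ∑' n : ℕ, (n : ℝ) * q n
  have hN : 0 ≤ N := tsum_nonneg fun n => mul_nonneg n.cast_nonneg (hq n)
  have hgeom := neg_tsum_mul_log_le_of_geometric (c := (N + 1) / (N + 2)) hq hq_sum hq_one
    hq_mean hq_log (by positivity) ((div_lt_one (by positivity)).2 (by linarith))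
  have hone_sub : 1 - (N + 1) / (N + 2) = (N + 2)⁻¹ := by field_simp; ring
  have hc : (N + 1) / (N + 2) = ((N + 2) / (N + 1))⁻¹ := (inv_div _ _).symm
  rw [hone_sub, hc, log_inv, log_inv, log_div (by linarith) (by linarith)] at hgeom
  have hbound := log_add_one_add_mul_log_lt (M := N + 1) (by linarith)
  rw [show N + 1 + 1 = N + 2 by ring, add_sub_cancel_right,
    log_div (by linarith) (by linarith)] at hbound
  linarith

theorem ensemble_length_heisenberg_general
    (q : ℕ → ℝ) (hq : ∀ n, 0 ≤ q n) (hqsum : Summable q) (hq1 : ∑' n, q n = 1)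
    (hqmean : Summable (fun n : ℕ => (n : ℝ) * q n))
    (hqent : Summable (fun n => q n * Real.log (q n)))
    (Hp Hq Nmean L : ℝ)
    (hHq : Hq = -∑' n, q n * Real.log (q n))
    (hN : Nmean = ∑' n : ℕ, (n : ℝ) * q n)
    (hL : L = Real.exp Hp)
    (hEUR : Hp + Hq ≥ Real.log (2 * π)) :
    L ≥ 2 * π * Real.exp (-Hq) ∧
      2 * π * Real.exp (-Hq) > (2 * π / Real.exp 1) / (Nmean + 1) := by
  have h2π : 0 < 2 * π := by positivity
  have hNmean : 0 < Nmean + 1 := by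
    have : 0 ≤ Nmean := hN ▸ tsum_nonneg fun n => mul_nonneg n.cast_nonneg (hq n)
    linarith
  have hHq_lt : Hq < log (Nmean + 1) + 1 :=
    hHq ▸ hN ▸ neg_tsum_mul_log_lt_log_mean_add_one hq hqsum hq1 hqmean hqent
  constructor
  · calc 2 * π * exp (-Hq) = exp (log (2 * π) - Hq) := by
          rw [exp_sub, exp_log h2π, exp_neg, div_eq_mul_inv]
      _ ≤ L := hL ▸ exp_le_exp.2 (by linarith)
  · calc (2 * π / exp 1) / (Nmean + 1) = 2 * π * exp (-(log (Nmean + 1) + 1)) := by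
          rw [exp_neg, exp_add, exp_log hNmean]
          field_simp
      _ < 2 * π * exp (-Hq) := by gcongr

/-- Ensemble-length Heisenberg bound: if a density p on [-π,π] and a distribution q
on ℕ with mean ⟨N⟩ satisfy H(p) + H(q) ≥ log 2π, then
L = e^{H(p)} ≥ 2π e^{-H(q)} > (2π/e)/(⟨N⟩+1). -/
theorem ensemble_length_heisenberg
    (p : ℝ → ℝ) (hmeas : Measurable p) (hpos : ∀ x, 0 ≤ p x)
    (hsupp : ∀ x, x ∉ Set.Icc (-π) π → p x = 0)
    (hint : Integrable p) (hp1 : ∫ x, p x = 1)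
    (hplogp : Integrable (fun x => p x * Real.log (p x)))
    (q : ℕ → ℝ) (hq : ∀ n, 0 ≤ q n) (hqsum : Summable q) (hq1 : ∑' n, q n = 1)
    (hqmean : Summable (fun n : ℕ => (n : ℝ) * q n))
    (hqent : Summable (fun n => q n * Real.log (q n)))
    (Hp Hq Nmean L : ℝ)
    (hHp : Hp = -∫ θ, p θ * Real.log (p θ))
    (hHq : Hq = -∑' n, q n * Real.log (q n))
    (hN : Nmean = ∑' n : ℕ, (n : ℝ) * q n)
    (hL : L = Real.exp Hp)
    (hEUR : Hp + Hq ≥ Real.log (2 * π)) :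
    L ≥ 2 * π * Real.exp (-Hq) ∧
      2 * π * Real.exp (-Hq) > (2 * π / Real.exp 1) / (Nmean + 1) :=
  ensemble_length_heisenberg_general q hq hqsum hq1 hqmean hqent Hp Hq Nmean L hHq hN hL hEUR
end

section
/- Let X be a random variable with values in [-π, π] and suppose (E[X²])^{1/2} ≤ k_C/(n+1) for n ≥ 0 where k_C > 0. Then the Holevo variance satisfies (δ_H)² ≤ k_C²/(n+1)² · (1 - k_C²/(2(n+1)²))^{-2}, provided k_C² < 2(n+1)². -/
/-!
Since `cos x ≥ 1 - x²/2`, the real part of `E[e^{iX}]` is at least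
`1 - E[X²]/2`, so `δ_H² = |E[e^{iX}]|⁻² - 1 ≤ (1 - E[X²]/2)⁻² - 1`. The right-hand side is
increasing in `E[X²]` on `(-∞, 2)`, so we may replace `E[X²]` by its bound `t = k_C²/(n+1)²`,
and finally `(1 - t/2)⁻² - 1 ≤ t (1 - t/2)⁻²` because `1 - (1 - t/2)² = t - t²/4 ≤ t`.
-/

open MeasureTheory Complex

section CharacteristicValue

variable {Ω : Type*} [MeasurableSpace Ω] {μ : Measure Ω} [IsProbabilityMeasure μ] {X : Ω → ℝ}

lemma integrable_exp_ofReal_mul_I (hX : AEMeasurable X μ) :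
    Integrable (fun ω => exp (X ω * I)) μ := by
  refine (integrable_const (1 : ℝ)).mono' ?_ (ae_of_all _ fun ω => ?_)
  · exact (measurable_exp.comp_aemeasurable
      ((measurable_ofReal.comp_aemeasurable hX).mul_const I)).aestronglyMeasurable
  · exact (norm_exp_ofReal_mul_I (X ω)).le

lemma integral_cos_eq_re_integral_exp_ofReal_mul_I (hX : AEMeasurable X μ) :
    ∫ ω, Real.cos (X ω) ∂μ = (∫ ω, exp (X ω * I) ∂μ).re := by
  rw [← RCLike.re_eq_complex_re, ← integral_re (integrable_exp_ofReal_mul_I hX)]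
  simp only [RCLike.re_eq_complex_re, exp_ofReal_mul_I_re]

lemma one_sub_integral_sq_div_two_le_norm_integral_exp_ofReal_mul_I (hX : AEMeasurable X μ)
    (hX2 : Integrable (fun ω => X ω ^ 2) μ) :
    1 - (∫ ω, X ω ^ 2 ∂μ) / 2 ≤ ‖∫ ω, exp (X ω * I) ∂μ‖ := by
  have hcos : Integrable (fun ω => Real.cos (X ω)) μ :=
    (integrable_exp_ofReal_mul_I hX).re.congr
      (ae_of_all _ fun ω => by simp only [RCLike.re_eq_complex_re, exp_ofReal_mul_I_re])
  calc 1 - (∫ ω, X ω ^ 2 ∂μ) / 2 = ∫ ω, (1 - X ω ^ 2 / 2) ∂μ := by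
        rw [integral_sub (integrable_const 1) (hX2.div_const 2), integral_div]
        simp
    _ ≤ ∫ ω, Real.cos (X ω) ∂μ :=
        integral_mono ((integrable_const 1).sub (hX2.div_const 2)) hcos
          fun _ => Real.one_sub_sq_div_two_le_cos
    _ = (∫ ω, exp (X ω * I) ∂μ).re := integral_cos_eq_re_integral_exp_ofReal_mul_I hX
    _ ≤ ‖∫ ω, exp (X ω * I) ∂μ‖ := re_le_norm _

lemma holevo_variance_le_of_integral_sq_lt_two (hX : AEMeasurable X μ)
    (hX2 : Integrable (fun ω => X ω ^ 2) μ) (hlt : ∫ ω, X ω ^ 2 ∂μ < 2) :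
    (‖∫ ω, exp (X ω * I) ∂μ‖ ^ 2)⁻¹ - 1 ≤ ((1 - (∫ ω, X ω ^ 2 ∂μ) / 2) ^ 2)⁻¹ - 1 := by
  have hpos : 0 < 1 - (∫ ω, X ω ^ 2 ∂μ) / 2 := by linarith
  gcongr
  exact one_sub_integral_sq_div_two_le_norm_integral_exp_ofReal_mul_I hX hX2

end CharacteristicValue

lemma monotoneOn_inv_one_sub_half_sq_sub_one :
    MonotoneOn (fun x : ℝ => ((1 - x / 2) ^ 2)⁻¹ - 1) (Set.Iio 2) := by
  intro x _ y hy hxy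
  have hpos : 0 < 1 - y / 2 := by linarith [Set.mem_Iio.mp hy]
  dsimp only
  gcongr

lemma inv_one_sub_half_sq_sub_one_le (t : ℝ) :
    ((1 - t / 2) ^ 2)⁻¹ - 1 ≤ t * ((1 - t / 2) ^ 2)⁻¹ := by
  rcases eq_or_ne (1 - t / 2) 0 with h | h
  · simp [h]
  · have hsq : 0 < (1 - t / 2) ^ 2 := by positivity
    calc ((1 - t / 2) ^ 2)⁻¹ - 1 = (1 - (1 - t / 2) ^ 2) * ((1 - t / 2) ^ 2)⁻¹ := by
          rw [one_sub_mul, mul_inv_cancel₀ hsq.ne']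
      _ ≤ t * ((1 - t / 2) ^ 2)⁻¹ := by
          gcongr
          nlinarith [sq_nonneg t]

theorem holevo_variance_asymptotic_general (Ω : Type*) [MeasureSpace Ω]
    (ℙ : Measure Ω) [IsProbabilityMeasure ℙ]
    (X : Ω → ℝ) (hmeas : Measurable X)
    (hint2 : Integrable (fun ω => (X ω) ^ 2) ℙ)
    (kC n : ℝ)
    (hrms : Real.sqrt (∫ ω, (X ω) ^ 2 ∂ℙ) ≤ kC / (n + 1))
    (hsmall : kC ^ 2 < 2 * (n + 1) ^ 2) :
    (‖∫ ω, Complex.exp ((X ω : ℂ) * Complex.I) ∂ℙ‖ ^ 2)⁻¹ - 1 ≤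
      kC ^ 2 / (n + 1) ^ 2 * (((1 - kC ^ 2 / (2 * (n + 1) ^ 2)) ^ 2)⁻¹) := by
  set m := ∫ ω, (X ω) ^ 2 ∂ℙ
  set t := kC ^ 2 / (n + 1) ^ 2
  have hmt : m ≤ t := by
    simpa only [div_pow] using (Real.sqrt_le_iff.mp hrms).2
  have hn : 0 < (n + 1) ^ 2 := by nlinarith [sq_nonneg kC]
  have ht : t < 2 := by rwa [div_lt_iff₀ hn]
  calc (‖∫ ω, exp (X ω * I) ∂ℙ‖ ^ 2)⁻¹ - 1
      ≤ ((1 - m / 2) ^ 2)⁻¹ - 1 :=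
        holevo_variance_le_of_integral_sq_lt_two hmeas.aemeasurable hint2 (hmt.trans_lt ht)
    _ ≤ ((1 - t / 2) ^ 2)⁻¹ - 1 :=
        monotoneOn_inv_one_sub_half_sq_sub_one (hmt.trans_lt ht) ht hmt
    _ ≤ t * ((1 - t / 2) ^ 2)⁻¹ := inv_one_sub_half_sq_sub_one_le t
    _ = _ := by rw [div_div, mul_comm 2 ((n + 1) ^ 2)]

/-- If a random variable X on [-π,π] has root mean square at most k_C/(n+1)
(with k_C² < 2(n+1)²), then the Holevo variance |E[e^{iX}]|⁻² - 1 is at most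
k_C²/(n+1)² · (1 - k_C²/(2(n+1)²))⁻². -/
theorem holevo_variance_asymptotic (Ω : Type*) [MeasureSpace Ω]
    (ℙ : Measure Ω) [IsProbabilityMeasure ℙ]
    (X : Ω → ℝ) (hmeas : Measurable X)
    (hrange : ∀ ω, X ω ∈ Set.Icc (-Real.pi) Real.pi)
    (hint2 : Integrable (fun ω => (X ω) ^ 2) ℙ)
    (kC n : ℝ) (hkC : 0 < kC) (hn : 0 ≤ n)
    (hrms : Real.sqrt (∫ ω, (X ω) ^ 2 ∂ℙ) ≤ kC / (n + 1))
    (hsmall : kC ^ 2 < 2 * (n + 1) ^ 2) :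
    (‖∫ ω, Complex.exp ((X ω : ℂ) * Complex.I) ∂ℙ‖ ^ 2)⁻¹ - 1 ≤
      kC ^ 2 / (n + 1) ^ 2 * (((1 - kC ^ 2 / (2 * (n + 1) ^ 2)) ^ 2)⁻¹) :=
  holevo_variance_asymptotic_general Ω ℙ X hmeas hint2 kC n hrms hsmall
end
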